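/- Let B = {x^{β₁},…,x^{β_μ}} be closed under division with β₁ = 0, and let D ∈ Hilb_B, i.e., D ∈ Hilb_μ is such that for each t the classes of B_t = B ∩ ℂ[x]_t form a basis of ℂ[x]/(D^⊥ + m^{t+1}). Let Λ = {Λ₁,…,Λ_μ} be the unique basis of D dual to B. Then Λ₁ = 1 and, for i = 2,…,μ, Λ_i = Σ_{j:|β_j|<|β_i|} Σ_{k=1}^n μ_{β_i,β_j+e_k} ∫ᵏΛ_j, where μ_{β_i,β_j+e_k} = Λ_i(x^{β_j+e_k}); equivalently ∂_{d_k}(Λ_i) = Σ_{j:|β_j|<|β_i|} μ_{β_i,β_j+e_k} Λ_j for all k. Consequently all coefficients μ_{β_i,α} of Λ_i (for |α| < μ) are determined, as polynomial functions, by the finitely many values {μ_{β_s,β_j+e_k} : |β_s| ≤ |β_i|, |β_j| < |β_s|, k = 1,…,n}. -/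

import Mathlib

open MvPolynomial

/-- Total degree `|β|` of an exponent vector `β ∈ ℕⁿ`. -/
def mdeg {n : ℕ} (a : Fin n →₀ ℕ) : ℕ := ∑ i, a i

/-- Iterated partial derivative `∂^β p`. -/
noncomputable def pdiff {n : ℕ} (β : Fin n →₀ ℕ) (p : MvPolynomial (Fin n) ℂ) :
    MvPolynomial (Fin n) ℂ :=
  (List.finRange n).foldr (fun i q => (fun r => pderiv i r)^[β i] q) p

/-- The linear functional on `ℂ[x]` attached to the dual polynomial `Λ ∈ ℂ[d_ξ]`:
`Λ(p) = Σ_β coeff_β(Λ) • (∂^β p)(ξ)`. -/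
noncomputable def dapply {n : ℕ} (ξ : Fin n → ℂ) (Λ p : MvPolynomial (Fin n) ℂ) : ℂ :=
  ∑ β ∈ Λ.support, coeff β Λ * eval ξ (pdiff β p)

/-- The shifted monomial `(x-ξ)^β`. -/
noncomputable def xpow {n : ℕ} (ξ : Fin n → ℂ) (β : Fin n →₀ ℕ) : MvPolynomial (Fin n) ℂ :=
  ∏ i, (X i - C (ξ i)) ^ β i

/-- `∫ᵏΛ`: substitute `0` for `d_{k+1},…,d_n` in `Λ` and take the antiderivative with
respect to `d_k` having no constant term. -/
noncomputable def integ {n : ℕ} (k : Fin n) (Λ : MvPolynomial (Fin n) ℂ) :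
    MvPolynomial (Fin n) ℂ :=
  let Λ' := aeval (fun i => if i ≤ k then X i else 0) Λ
  ∑ β ∈ Λ'.support, monomial (β + Finsupp.single k 1) (coeff β Λ' / ((β k : ℂ) + 1))

/-- The maximal ideal `m_ξ` of polynomials vanishing at `ξ`. -/
noncomputable def mIdeal {n : ℕ} (ξ : Fin n → ℂ) : Ideal (MvPolynomial (Fin n) ℂ) :=
  RingHom.ker (eval ξ)

/-- `β! = β₁!⋯βₙ!`. -/
def ffact {n : ℕ} (a : Fin n →₀ ℕ) : ℕ := ∏ i, (a i).factorial

/-!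
The heart of the matter is a degree bound: `Λ_j` has degree at most `|β_j| = t`. Both `Λ_j` and
the `j`-th coordinate functional of the basis `B_t` of `ℂ[x]/(D^⊥ + m^{t+1})` vanish on
`D^⊥ + m^μ` and take the same values on `B`, which spans `ℂ[x]` modulo that ideal; so they
coincide, and the latter kills `m^{t+1}`.

Given the bound, `∂_{d_k} Λ_i ∈ D` expands in the dual basis with coefficients
`(∂_{d_k} Λ_i)(x^{β_j}) = Λ_i(x^{β_j + e_k})`, which vanish unless `|β_j| < |β_i|`. Integrating
back, `Λ = Σ_k ∫ᵏ ∂_{d_k} Λ` whenever `Λ(1) = 0`, and this recursion determines the `Λ_i` by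
induction on `|β_i|`.
-/

lemma Submodule.span_range_sup_restrictScalars_eq_top {K A ι : Type*} [CommRing K] [CommRing A]
    [Algebra K A] {I : Ideal A} (b : Module.Basis ι K (A ⧸ I)) {v : ι → A}
    (hv : ∀ i, b i = Ideal.Quotient.mk I (v i)) :
    Submodule.span K (Set.range v) ⊔ I.restrictScalars K = ⊤ := by
  refine eq_top_iff.mpr fun p _ => ?_
  have hrange : Set.range b = (Ideal.Quotient.mkₐ K I).toLinearMap '' Set.range v := by
    rw [← Set.range_comp]
    exact congrArg Set.range (funext hv)
  have hp : Ideal.Quotient.mk I p ∈ Submodule.span K (Set.range b) := b.span_eq ▸ trivial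
  rw [hrange, Submodule.span_image] at hp
  obtain ⟨y, hy, hyp⟩ := hp
  refine Submodule.mem_sup.mpr ⟨y, hy, p - y, ?_, add_sub_cancel y p⟩
  exact (Submodule.restrictScalars_mem K I _).mpr (Ideal.Quotient.eq.mp hyp.symm)

lemma Submodule.eq_sum_smul_of_dual {K V ι : Type*} [Field K] [AddCommGroup V] [Module K V]
    [Fintype ι] [Nonempty ι] [DecidableEq ι] {W : Submodule K V}
    (hW : Module.finrank K W = Fintype.card ι) (f : ι → Module.Dual K V) {v : ι → V}
    (hv : ∀ i, v i ∈ W) (hfv : ∀ i j, f j (v i) = if i = j then 1 else 0) {w : V} (hw : w ∈ W) :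
    w = ∑ i, f i w • v i := by
  have hcoord : ∀ (c : ι → K) j, f j (∑ i, c i • v i) = c j := fun c j => by
    simp [hfv]
  have hli : LinearIndependent K fun i => (⟨v i, hv i⟩ : W) :=
    LinearIndependent.of_comp W.subtype <| Fintype.linearIndependent_iff.mpr
      fun c hc j => by simpa [hcoord] using congrArg (f j) hc
  have hspan := hli.span_eq_top_of_card_eq_finrank hW.symm
  obtain ⟨c, hc⟩ := (Submodule.mem_span_range_iff_exists_fun K).mp
    (hspan ▸ Submodule.mem_top : (⟨w, hw⟩ : W) ∈ Submodule.span K _)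
  replace hc : ∑ i, c i • v i = w := by simpa using congrArg Subtype.val hc
  subst hc
  simp_rw [hcoord]

lemma eq_of_forall_eq_of_lt {ι α : Type*} (r : ι → ℕ) {f g : ι → α}
    (h : ∀ i, (∀ j, r j < r i → f j = g j) → f i = g i) : f = g :=
  funext fun i => (measure r).wf.induction i h

section

variable {n : ℕ}

lemma mdeg_eq_degree (a : Fin n →₀ ℕ) : mdeg a = a.degree :=
  (Finsupp.degree_eq_sum a).symm

lemma ffact_add_single (a : Fin n →₀ ℕ) (k : Fin n) :
    ffact (a + Finsupp.single k 1) = (a k + 1) * ffact a := by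
  calc ffact (a + Finsupp.single k 1)
      = ∏ i, (if k = i then a i + 1 else 1) * (a i).factorial :=
        Finset.prod_congr rfl fun i _ => by
          by_cases h : k = i
          · subst h; simp [Nat.factorial_succ]
          · simp [h]
    _ = (a k + 1) * ffact a := by rw [Finset.prod_mul_distrib, Finset.prod_ite_eq]; simp [ffact]

lemma ffact_ne_zero (a : Fin n →₀ ℕ) : ffact a ≠ 0 :=
  Finset.prod_ne_zero_iff.mpr fun _ _ => Nat.factorial_ne_zero _

lemma ffact_mul_coeff_pderiv (k : Fin n) (γ : Fin n →₀ ℕ) (p : MvPolynomial (Fin n) ℂ) :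
    (ffact γ : ℂ) * coeff γ (pderiv k p)
      = ffact (γ + Finsupp.single k 1) * coeff (γ + Finsupp.single k 1) p := by
  rw [coeff_pderiv, ffact_add_single]
  push_cast
  ring

lemma ffact_mul_coeff_iterate_pderiv (k : Fin n) (m : ℕ) (γ : Fin n →₀ ℕ)
    (p : MvPolynomial (Fin n) ℂ) :
    (ffact γ : ℂ) * coeff γ ((fun r => pderiv k r)^[m] p)
      = ffact (γ + Finsupp.single k m) * coeff (γ + Finsupp.single k m) p := by
  induction m generalizing γ with
  | zero => simp
  | succ m ih =>
    rw [Function.iterate_succ_apply', ffact_mul_coeff_pderiv, ih, add_assoc,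
      ← Finsupp.single_add, add_comm 1 m]

lemma ffact_mul_coeff_foldr_pderiv (δ : Fin n →₀ ℕ) (l : List (Fin n)) (γ : Fin n →₀ ℕ)
    (p : MvPolynomial (Fin n) ℂ) :
    (ffact γ : ℂ) * coeff γ (l.foldr (fun i q => (fun r => pderiv i r)^[δ i] q) p)
      = ffact (γ + (l.map fun i => Finsupp.single i (δ i)).sum)
          * coeff (γ + (l.map fun i => Finsupp.single i (δ i)).sum) p := by
  induction l generalizing γ with
  | nil => simp
  | cons a l ih =>
    rw [List.foldr_cons, ffact_mul_coeff_iterate_pderiv, ih, List.map_cons, List.sum_cons,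
      add_assoc]

lemma eval_zero_pdiff (δ : Fin n →₀ ℕ) (p : MvPolynomial (Fin n) ℂ) :
    eval 0 (pdiff δ p) = ffact δ * coeff δ p := by
  have h := ffact_mul_coeff_foldr_pderiv δ (List.finRange n) 0 p
  rw [← Fin.sum_univ_def, Finsupp.univ_sum_single, zero_add] at h
  simpa [pdiff, ffact, eval_zero, constantCoeff_eq] using h

lemma dapply_zero_eq_sum {Λ p : MvPolynomial (Fin n) ℂ} {s : Finset (Fin n →₀ ℕ)}
    (hs : Λ.support ∩ p.support ⊆ s) :
    dapply 0 Λ p = ∑ γ ∈ s, ffact γ * coeff γ Λ * coeff γ p := by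
  have hvanish : ∀ γ ∉ Λ.support ∩ p.support, (ffact γ : ℂ) * coeff γ Λ * coeff γ p = 0 := by
    intro γ hγ
    rcases not_and_or.mp (Finset.mem_inter.not.mp hγ) with h | h <;>
      simp [notMem_support_iff.mp h]
  rw [dapply, ← Finset.sum_subset hs fun γ _ hγ => hvanish γ hγ,
    Finset.sum_subset Finset.inter_subset_left fun γ _ hγ => hvanish γ hγ]
  exact Finset.sum_congr rfl fun γ _ => by rw [eval_zero_pdiff]; ring

noncomputable def apolarPairing :
    MvPolynomial (Fin n) ℂ →ₗ[ℂ] MvPolynomial (Fin n) ℂ →ₗ[ℂ] ℂ :=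
  LinearMap.mk₂ ℂ (dapply 0)
    (fun Λ₁ Λ₂ p => by
      simp only [dapply_zero_eq_sum (s := p.support) Finset.inter_subset_right, coeff_add,
        ← Finset.sum_add_distrib]
      exact Finset.sum_congr rfl fun γ _ => by ring)
    (fun c Λ p => by
      simp only [dapply_zero_eq_sum (s := p.support) Finset.inter_subset_right, coeff_smul,
        smul_eq_mul, Finset.mul_sum]
      exact Finset.sum_congr rfl fun γ _ => by ring)
    (fun Λ p₁ p₂ => by
      simp only [dapply_zero_eq_sum (s := Λ.support) Finset.inter_subset_left, coeff_add,
        ← Finset.sum_add_distrib]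
      exact Finset.sum_congr rfl fun γ _ => by ring)
    (fun c Λ p => by
      simp only [dapply_zero_eq_sum (s := Λ.support) Finset.inter_subset_left, coeff_smul,
        smul_eq_mul, Finset.mul_sum]
      exact Finset.sum_congr rfl fun γ _ => by ring)

@[simp]
lemma apolarPairing_apply (Λ p : MvPolynomial (Fin n) ℂ) : apolarPairing Λ p = dapply 0 Λ p :=
  rfl

lemma dapply_monomial (Λ : MvPolynomial (Fin n) ℂ) (γ : Fin n →₀ ℕ) (c : ℂ) :
    dapply 0 Λ (monomial γ c) = ffact γ * coeff γ Λ * c := by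
  rw [dapply_zero_eq_sum (s := {γ}) (Finset.inter_subset_right.trans support_monomial_subset),
    Finset.sum_singleton, coeff_monomial, if_pos rfl]

lemma dapply_pderiv_monomial (Λ : MvPolynomial (Fin n) ℂ) (k : Fin n) (γ : Fin n →₀ ℕ) (c : ℂ) :
    dapply 0 (pderiv k Λ) (monomial γ c)
      = dapply 0 Λ (monomial (γ + Finsupp.single k 1) c) := by
  rw [dapply_monomial, dapply_monomial, ffact_mul_coeff_pderiv]

lemma dapply_X_mul (Λ : MvPolynomial (Fin n) ℂ) (k : Fin n) (p : MvPolynomial (Fin n) ℂ) :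
    dapply 0 Λ (X k * p) = dapply 0 (pderiv k Λ) p := by
  induction p using MvPolynomial.induction_on' with
  | monomial γ c =>
    rw [dapply_pderiv_monomial, X, monomial_mul, one_mul, add_comm]
  | add p q hp hq =>
    simp only [mul_add, ← apolarPairing_apply, map_add] at hp hq ⊢
    rw [hp, hq]

lemma mIdeal_zero_eq_idealOfVars : mIdeal (0 : Fin n → ℂ) = idealOfVars (Fin n) ℂ := by
  ext p
  rw [mIdeal, RingHom.mem_ker, eval_zero, constantCoeff_eq, ← pow_one (idealOfVars _ _),
    mem_pow_idealOfVars_iff']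
  simp [Finsupp.degree_eq_zero_iff]

lemma monomial_mem_mIdeal_pow {k : ℕ} {γ : Fin n →₀ ℕ} (hγ : k ≤ mdeg γ) :
    monomial γ (1 : ℂ) ∈ mIdeal 0 ^ k := by
  rw [mIdeal_zero_eq_idealOfVars, monomial_mem_pow_idealOfVars_iff _ _ one_ne_zero,
    ← mdeg_eq_degree]
  exact hγ

lemma dapply_eq_zero_of_mem_mIdeal_pow {N : ℕ} {Λ p : MvPolynomial (Fin n) ℂ}
    (hΛ : Λ.totalDegree < N) (hp : p ∈ mIdeal 0 ^ N) : dapply 0 Λ p = 0 := by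
  rw [mIdeal_zero_eq_idealOfVars, mem_pow_idealOfVars_iff'] at hp
  rw [dapply_zero_eq_sum (s := Λ.support) Finset.inter_subset_left]
  refine Finset.sum_eq_zero fun γ hγ => ?_
  rw [hp γ ((le_totalDegree hγ).trans_lt hΛ), mul_zero]

/-- `D^⊥`, an ideal because `D` is closed under the `∂_{d_i}` (see `dapply_X_mul`). -/
noncomputable def perpIdeal (D : Submodule ℂ (MvPolynomial (Fin n) ℂ))
    (hD : ∀ Λ ∈ D, ∀ i, pderiv i Λ ∈ D) : Ideal (MvPolynomial (Fin n) ℂ) where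
  carrier := {p | ∀ Λ ∈ D, dapply 0 Λ p = 0}
  zero_mem' Λ _ := map_zero (apolarPairing Λ)
  add_mem' {p q} hp hq Λ hΛ := by
    rw [← apolarPairing_apply, map_add, apolarPairing_apply, apolarPairing_apply, hp Λ hΛ,
      hq Λ hΛ, add_zero]
  smul_mem' c := by
    induction c using MvPolynomial.induction_on with
    | C a =>
      intro p hp Λ hΛ
      rw [smul_eq_mul, ← smul_eq_C_mul, ← apolarPairing_apply, map_smul, apolarPairing_apply,
        hp Λ hΛ, smul_zero]
    | add c₁ c₂ h₁ h₂ =>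
      intro p hp Λ hΛ
      rw [add_smul, ← apolarPairing_apply, map_add, apolarPairing_apply, apolarPairing_apply,
        h₁ hp Λ hΛ, h₂ hp Λ hΛ, add_zero]
    | mul_X c i h =>
      intro p hp Λ hΛ
      rw [smul_eq_mul, mul_assoc]
      refine h (fun Λ' hΛ' => ?_) Λ hΛ
      rw [dapply_X_mul]
      exact hp _ (hD Λ' hΛ' i)

lemma aeval_truncate_monomial (k : Fin n) (γ : Fin n →₀ ℕ) (c : ℂ) :
    aeval (fun i => if i ≤ k then (X i : MvPolynomial (Fin n) ℂ) else 0) (monomial γ c)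
      = if ∀ i, k < i → γ i = 0 then monomial γ c else 0 := by
  rw [aeval_monomial, algebraMap_eq]
  split_ifs with hγ
  · rw [Finsupp.prod_congr (g2 := fun i e => (X i : MvPolynomial (Fin n) ℂ) ^ e) fun i hi => by
      rw [if_pos (not_lt.mp fun hki => Finsupp.mem_support_iff.mp hi (hγ i hki))],
      ← monomial_eq]
  · push Not at hγ
    obtain ⟨i, hki, hi⟩ := hγ
    rw [Finsupp.prod, Finset.prod_eq_zero (Finsupp.mem_support_iff.mpr hi)
      (by simp [not_le.mpr hki, hi]), mul_zero]

lemma coeff_aeval_truncate (k : Fin n) (Λ : MvPolynomial (Fin n) ℂ) (γ : Fin n →₀ ℕ) :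
    coeff γ (aeval (fun i => if i ≤ k then (X i : MvPolynomial (Fin n) ℂ) else 0) Λ)
      = if ∀ i, k < i → γ i = 0 then coeff γ Λ else 0 := by
  induction Λ using MvPolynomial.induction_on' with
  | monomial δ c =>
    rw [aeval_truncate_monomial]
    by_cases h : δ = γ
    · subst h
      split_ifs <;> simp
    · split_ifs <;> simp [coeff_monomial, h]
  | add p q hp hq =>
    rw [map_add, coeff_add, hp, hq, coeff_add]
    split_ifs <;> simp

lemma coeff_integ_of_eq_zero (k : Fin n) (Λ : MvPolynomial (Fin n) ℂ) {δ : Fin n →₀ ℕ}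
    (hδ : δ k = 0) : coeff δ (integ k Λ) = 0 := by
  rw [integ, coeff_sum]
  refine Finset.sum_eq_zero fun γ _ => ?_
  rw [coeff_monomial, if_neg]
  rintro rfl
  simp at hδ

lemma coeff_integ_add_single (k : Fin n) (Λ : MvPolynomial (Fin n) ℂ) (γ : Fin n →₀ ℕ) :
    coeff (γ + Finsupp.single k 1) (integ k Λ)
      = (if ∀ i, k < i → γ i = 0 then coeff γ Λ else 0) / (γ k + 1) := by
  rw [integ, coeff_sum, ← coeff_aeval_truncate]
  simp_rw [coeff_monomial, add_left_inj]
  rw [Finset.sum_ite_eq']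
  split_ifs with h
  · rfl
  · rw [notMem_support_iff.mp h, zero_div]

lemma eq_add_single_of_ne_zero {δ : Fin n →₀ ℕ} {k : Fin n} (hδ : δ k ≠ 0) :
    ∃ γ, δ = γ + Finsupp.single k 1 :=
  ⟨δ - Finsupp.single k 1, (tsub_add_cancel_of_le (Finsupp.single_le_iff.mpr
    (Nat.one_le_iff_ne_zero.mpr hδ))).symm⟩

lemma integ_sum_smul {ι : Type*} (k : Fin n) (s : Finset ι) (c : ι → ℂ)
    (Λ : ι → MvPolynomial (Fin n) ℂ) :
    integ k (∑ j ∈ s, c j • Λ j) = ∑ j ∈ s, c j • integ k (Λ j) := by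
  ext δ
  rw [coeff_sum]
  by_cases hδ : δ k = 0
  · simp only [coeff_smul, coeff_integ_of_eq_zero k _ hδ, smul_zero, Finset.sum_const_zero]
  · obtain ⟨γ, rfl⟩ := eq_add_single_of_ne_zero hδ
    by_cases hγ : ∀ i, k < i → γ i = 0
    · simp only [coeff_smul, coeff_integ_add_single, if_pos hγ, coeff_sum, Finset.sum_div,
        smul_eq_mul, mul_div_assoc]
    · simp [coeff_integ_add_single, hγ]

lemma coeff_integ_pderiv (k : Fin n) (Λ : MvPolynomial (Fin n) ℂ) (δ : Fin n →₀ ℕ) :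
    coeff δ (integ k (pderiv k Λ))
      = if δ k ≠ 0 ∧ ∀ i, k < i → δ i = 0 then coeff δ Λ else 0 := by
  by_cases hδ : δ k = 0
  · simp [coeff_integ_of_eq_zero k _ hδ, hδ]
  obtain ⟨γ, rfl⟩ := eq_add_single_of_ne_zero hδ
  have hshift : ∀ i, k < i → (γ + Finsupp.single k 1 : Fin n →₀ ℕ) i = γ i := fun i hi => by
    simp [hi.ne]
  have hcond : (∀ i, k < i → (γ + Finsupp.single k 1 : Fin n →₀ ℕ) i = 0) ↔
      ∀ i, k < i → γ i = 0 :=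
    forall₂_congr fun i hi => by rw [hshift i hi]
  rw [coeff_integ_add_single, coeff_pderiv, if_congr (and_iff_right hδ |>.trans hcond) rfl rfl]
  split_ifs
  · exact mul_div_cancel_right₀ _ (Nat.cast_add_one_ne_zero (γ k))
  · exact zero_div _

lemma sum_integ_pderiv {Λ : MvPolynomial (Fin n) ℂ} (h0 : coeff 0 Λ = 0) :
    ∑ k, integ k (pderiv k Λ) = Λ := by
  ext δ
  simp_rw [coeff_sum, coeff_integ_pderiv]
  by_cases hδ : δ = 0
  · simp [hδ, h0]
  -- only the last variable occurring in `d^δ` contributes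
  set k₀ := δ.support.max' (Finsupp.support_nonempty_iff.mpr hδ)
  have hk₀ : δ k₀ ≠ 0 := Finsupp.mem_support_iff.mp (Finset.max'_mem _ _)
  have hlast : ∀ i, k₀ < i → δ i = 0 := fun i hi => Finsupp.notMem_support_iff.mp
    fun hmem => absurd hi (not_lt.mpr (Finset.le_max' _ i hmem))
  rw [Finset.sum_eq_single k₀ (fun k _ hk => if_neg ?_) (by simp), if_pos ⟨hk₀, hlast⟩]
  rintro ⟨hδk, hk'⟩
  rcases lt_or_gt_of_ne hk with h | h
  · exact hk₀ (hk' k₀ h)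
  · exact hδk (hlast k h)

lemma mdeg_le_totalDegree_of_dapply_ne_zero {Λ : MvPolynomial (Fin n) ℂ} {γ : Fin n →₀ ℕ}
    {c : ℂ} (h : dapply 0 Λ (monomial γ c) ≠ 0) : mdeg γ ≤ Λ.totalDegree := by
  rw [dapply_monomial] at h
  rw [mdeg_eq_degree]
  exact le_totalDegree (mem_support_iff.mpr (right_ne_zero_of_mul (left_ne_zero_of_mul h)))

lemma apolarPairing_eq_coord_comp_mk {μ t N : ℕ} {β : Fin μ → (Fin n →₀ ℕ)}
    {J : Ideal (MvPolynomial (Fin n) ℂ)} {Λ : MvPolynomial (Fin n) ℂ} {j : Fin μ}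
    (hΛ : Λ.totalDegree ≤ N) (hΛJ : ∀ p ∈ J, dapply 0 Λ p = 0)
    (hdual : ∀ s, dapply 0 Λ (monomial (β s) 1) = if j = s then 1 else 0)
    (bN : Module.Basis {s // mdeg (β s) ≤ N} ℂ
      (MvPolynomial (Fin n) ℂ ⧸ (J + mIdeal (0 : Fin n → ℂ) ^ (N + 1))))
    (hbN : ∀ s, bN s = Ideal.Quotient.mk _ (monomial (β s.1) (1 : ℂ)))
    (bt : Module.Basis {s // mdeg (β s) ≤ t} ℂ
      (MvPolynomial (Fin n) ℂ ⧸ (J + mIdeal (0 : Fin n → ℂ) ^ (t + 1))))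
    (hbt : ∀ s, bt s = Ideal.Quotient.mk _ (monomial (β s.1) (1 : ℂ)))
    (hjt : mdeg (β j) ≤ t) (htN : t ≤ N) :
    apolarPairing Λ =
      bt.coord ⟨j, hjt⟩ ∘ₗ (Ideal.Quotient.mkₐ ℂ (J + mIdeal 0 ^ (t + 1))).toLinearMap := by
  set φ := bt.coord ⟨j, hjt⟩ ∘ₗ (Ideal.Quotient.mkₐ ℂ (J + mIdeal 0 ^ (t + 1))).toLinearMap
  have hφ : ∀ p ∈ J + mIdeal 0 ^ (t + 1), φ p = 0 := fun p hp => by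
    change bt.coord ⟨j, hjt⟩ (Ideal.Quotient.mk _ p) = 0
    rw [Ideal.Quotient.eq_zero_iff_mem.mpr hp, map_zero]
  -- both functionals kill `J + m^{N+1}` and agree on `B`, which spans modulo that ideal
  rw [← sub_eq_zero, ← LinearMap.ker_eq_top, eq_top_iff,
    ← Submodule.span_range_sup_restrictScalars_eq_top bN hbN]
  refine sup_le (Submodule.span_le.mpr ?_) fun p hp => ?_
  · rintro _ ⟨s, rfl⟩
    rw [SetLike.mem_coe, LinearMap.mem_ker, LinearMap.sub_apply, sub_eq_zero,
      apolarPairing_apply, hdual]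
    by_cases hs : mdeg (β s.1) ≤ t
    · have hφs : φ (monomial (β s.1) 1) = bt.coord ⟨j, hjt⟩ (bt ⟨s.1, hs⟩) := by
        rw [hbt]; rfl
      rw [hφs, Module.Basis.coord_apply, Module.Basis.repr_self, Finsupp.single_apply]
      simp [eq_comm]
    · rw [hφ _ (Submodule.mem_sup_right (monomial_mem_mIdeal_pow (not_le.mp hs))), if_neg]
      rintro rfl
      exact hs hjt
  · obtain ⟨q, hq, r, hr, rfl⟩ :=
      Submodule.mem_sup.mp ((Submodule.restrictScalars_mem ℂ _ _).mp hp)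
    have hsub : J + mIdeal 0 ^ (N + 1) ≤ J + mIdeal 0 ^ (t + 1) :=
      sup_le_sup_left (Ideal.pow_le_pow_right (by omega)) J
    rw [LinearMap.mem_ker, LinearMap.sub_apply, hφ _ (hsub (Submodule.mem_sup.mpr
        ⟨q, hq, r, hr, rfl⟩)), sub_zero, map_add, apolarPairing_apply, apolarPairing_apply,
      hΛJ q hq, dapply_eq_zero_of_mem_mIdeal_pow (Nat.lt_succ_of_le hΛ) hr, add_zero]

theorem coeff_eq_zero_of_mdeg_lt {μ N : ℕ} {β : Fin μ → (Fin n →₀ ℕ)}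
    {J : Ideal (MvPolynomial (Fin n) ℂ)} {Λ : MvPolynomial (Fin n) ℂ} {j : Fin μ}
    (hΛ : Λ.totalDegree ≤ N) (hΛJ : ∀ p ∈ J, dapply 0 Λ p = 0)
    (hdual : ∀ s, dapply 0 Λ (monomial (β s) 1) = if j = s then 1 else 0)
    (hB : ∀ t, ∃ bt : Module.Basis {s // mdeg (β s) ≤ t} ℂ
      (MvPolynomial (Fin n) ℂ ⧸ (J + mIdeal (0 : Fin n → ℂ) ^ (t + 1))),
        ∀ s, bt s = Ideal.Quotient.mk _ (monomial (β s.1) (1 : ℂ)))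
    {γ : Fin n →₀ ℕ} (hγ : mdeg (β j) < mdeg γ) :
    coeff γ Λ = 0 := by
  obtain ⟨bN, hbN⟩ := hB N
  obtain ⟨bt, hbt⟩ := hB (mdeg (β j))
  have hjN : mdeg (β j) ≤ N :=
    (mdeg_le_totalDegree_of_dapply_ne_zero (c := 1) (by simp [hdual])).trans hΛ
  have hγJ : monomial γ 1 ∈ J + mIdeal 0 ^ (mdeg (β j) + 1) :=
    Submodule.mem_sup_right (monomial_mem_mIdeal_pow hγ)
  have hγΛ : dapply 0 Λ (monomial γ 1) = 0 := by
    rw [← apolarPairing_apply,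
      apolarPairing_eq_coord_comp_mk hΛ hΛJ hdual bN hbN bt hbt le_rfl hjN]
    change bt.coord _ (Ideal.Quotient.mk _ (monomial γ 1)) = 0
    rw [Ideal.Quotient.eq_zero_iff_mem.mpr hγJ, map_zero]
  simpa [dapply_monomial, ffact_ne_zero] using hγΛ

lemma dapply_one (Λ : MvPolynomial (Fin n) ℂ) : dapply 0 Λ 1 = coeff 0 Λ := by
  simpa [ffact] using dapply_monomial Λ 0 1

lemma eq_one_of_coeff_eq_zero_of_mdeg_pos {Λ : MvPolynomial (Fin n) ℂ}
    (hdeg : ∀ γ, 0 < mdeg γ → coeff γ Λ = 0) (h1 : dapply 0 Λ 1 = 1) : Λ = 1 := by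
  ext γ
  by_cases hγ : γ = 0
  · simpa [hγ, dapply_one] using h1
  · rw [hdeg γ (Nat.pos_of_ne_zero fun h => hγ ((Finsupp.degree_eq_zero_iff γ).mp
      (mdeg_eq_degree γ ▸ h))), coeff_one, if_neg (Ne.symm hγ)]

lemma pderiv_eq_sum_filter_mdeg_lt {ι : Type*} [Fintype ι] {β : ι → (Fin n →₀ ℕ)}
    {Λ : ι → MvPolynomial (Fin n) ℂ} {q : MvPolynomial (Fin n) ℂ} {d : ℕ} (k : Fin n)
    (hexp : pderiv k q = ∑ j, dapply 0 (pderiv k q) (monomial (β j) 1) • Λ j)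
    (hdeg : ∀ γ, d < mdeg γ → coeff γ q = 0) :
    pderiv k q = ∑ j ∈ Finset.univ.filter (fun j => mdeg (β j) < d),
      dapply 0 q (monomial (β j + Finsupp.single k 1) 1) • Λ j := by
  simp_rw [dapply_pderiv_monomial] at hexp
  rw [hexp, Finset.sum_filter_of_ne]
  intro j _ hj
  by_contra hlt
  have hdj : d < mdeg (β j + Finsupp.single k 1) := by
    rw [mdeg_eq_degree, map_add, Finsupp.degree_single, ← mdeg_eq_degree]
    omega
  rw [dapply_monomial, hdeg _ hdj, mul_zero, zero_mul, zero_smul] at hj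
  exact hj rfl

lemma eq_sum_integ_of_pderiv_eq {ι : Type*} {q : MvPolynomial (Fin n) ℂ} (h0 : coeff 0 q = 0)
    (s : Finset ι) (c : ι → Fin n → ℂ) (Λ : ι → MvPolynomial (Fin n) ℂ)
    (h : ∀ k, pderiv k q = ∑ j ∈ s, c j k • Λ j) :
    q = ∑ j ∈ s, ∑ k, c j k • integ k (Λ j) := by
  rw [Finset.sum_comm, ← sum_integ_pderiv h0]
  simp_rw [h, integ_sum_smul]
end

theorem statement14_general {n μ : ℕ} (hμ : 0 < μ)
    (β : Fin μ → (Fin n →₀ ℕ))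
    (hβ0 : β ⟨0, hμ⟩ = 0)
    (D : Submodule ℂ (MvPolynomial (Fin n) ℂ))
    (hD : D ≤ restrictTotalDegree (Fin n) ℂ (μ - 1))
    (hdim : Module.finrank ℂ D = μ)
    (hstab : ∀ Λ' ∈ D, ∀ i : Fin n, pderiv i Λ' ∈ D)
    (hquot : ∀ Q : Ideal (MvPolynomial (Fin n) ℂ),
      (↑Q : Set (MvPolynomial (Fin n) ℂ)) =
          {p | ∀ Λ' ∈ D, dapply (0 : Fin n → ℂ) Λ' p = 0} →
      ∀ t : ℕ, ∃ bt : Module.Basis {j : Fin μ // mdeg (β j) ≤ t} ℂ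
          (MvPolynomial (Fin n) ℂ ⧸ (Q + mIdeal (0 : Fin n → ℂ) ^ (t + 1))),
        ∀ j, bt j = Ideal.Quotient.mk (Q + mIdeal (0 : Fin n → ℂ) ^ (t + 1))
          (monomial (β j.1) (1 : ℂ)))
    (Λ : Fin μ → MvPolynomial (Fin n) ℂ)
    (hmem : ∀ i, Λ i ∈ D)
    (hdual : ∀ i j, dapply (0 : Fin n → ℂ) (Λ i) (monomial (β j) (1 : ℂ)) =
      if i = j then 1 else 0) :
    Λ ⟨0, hμ⟩ = 1 ∧
    (∀ i, i ≠ ⟨0, hμ⟩ →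
      Λ i = ∑ j ∈ Finset.univ.filter (fun j => mdeg (β j) < mdeg (β i)), ∑ k,
        dapply (0 : Fin n → ℂ) (Λ i) (monomial (β j + Finsupp.single k 1) (1 : ℂ)) •
          integ k (Λ j)) ∧
    (∀ (i : Fin μ) (k : Fin n),
      pderiv k (Λ i) =
        ∑ j ∈ Finset.univ.filter (fun j => mdeg (β j) < mdeg (β i)),
          dapply (0 : Fin n → ℂ) (Λ i) (monomial (β j + Finsupp.single k 1) (1 : ℂ)) •
            Λ j) ∧
    (∀ Λ' : Fin μ → MvPolynomial (Fin n) ℂ,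
      Λ' ⟨0, hμ⟩ = 1 →
      (∀ i, i ≠ ⟨0, hμ⟩ →
        Λ' i = ∑ j ∈ Finset.univ.filter (fun j => mdeg (β j) < mdeg (β i)), ∑ k,
          dapply (0 : Fin n → ℂ) (Λ i) (monomial (β j + Finsupp.single k 1) (1 : ℂ)) •
            integ k (Λ' j)) →
      Λ' = Λ) := by
  have : Nonempty (Fin μ) := ⟨⟨0, hμ⟩⟩
  have hdeg : ∀ j γ, mdeg (β j) < mdeg γ → coeff γ (Λ j) = 0 := fun j γ =>
    coeff_eq_zero_of_mdeg_lt (J := perpIdeal D hstab)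
      ((mem_restrictTotalDegree _ _ _).mp (hD (hmem j))) (fun p hp => hp _ (hmem j)) (hdual j)
      (hquot (perpIdeal D hstab) rfl)
  have hexp : ∀ q ∈ D, q = ∑ j, dapply 0 q (monomial (β j) 1) • Λ j := fun q hq =>
    Submodule.eq_sum_smul_of_dual (hdim.trans (Fintype.card_fin μ).symm)
      (fun j => apolarPairing.flip (monomial (β j) 1)) hmem hdual hq
  have hderiv := fun i k =>
    pderiv_eq_sum_filter_mdeg_lt k (hexp _ (hstab _ (hmem i) k)) (hdeg i)
  have hrec := fun i (hi : i ≠ ⟨0, hμ⟩) => eq_sum_integ_of_pderiv_eq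
    (by simpa [hβ0, dapply_one, hi] using hdual i ⟨0, hμ⟩) _ _ _ (hderiv i)
  have hone : Λ ⟨0, hμ⟩ = 1 := eq_one_of_coeff_eq_zero_of_mdeg_pos
    (fun γ hγ => hdeg _ γ (by simpa [hβ0, mdeg] using hγ))
    (by simpa [hβ0] using hdual ⟨0, hμ⟩ ⟨0, hμ⟩)
  refine ⟨hone, hrec, hderiv, fun Λ' hone' hrec' => ?_⟩
  refine eq_of_forall_eq_of_lt (fun i => mdeg (β i)) fun i ih => ?_
  by_cases hi : i = ⟨0, hμ⟩
  · rw [hi, hone, hone']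
  calc Λ' i = _ := hrec' i hi
    _ = _ := Finset.sum_congr rfl fun j hj => by rw [ih j (Finset.mem_filter.mp hj).2]
    _ = Λ i := (hrec i hi).symm

/-- for D ∈ Hilb_B with B closed under division, the unique dual basis Λ
satisfies Λ₁ = 1, the integration recursion with μ_{β_i,β_j+e_k} = Λ_i(x^{β_j+e_k}),
the derivative formula, and is uniquely determined by these finitely many values. -/
theorem statement14 {n μ : ℕ} (hμ : 0 < μ)
    (β : Fin μ → (Fin n →₀ ℕ)) (hβinj : Function.Injective β)
    (hβ0 : β ⟨0, hμ⟩ = 0)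
    (hdiv : ∀ (i : Fin μ) (k : Fin n), β i k ≠ 0 → ∃ j, β j = β i - Finsupp.single k 1)
    (D : Submodule ℂ (MvPolynomial (Fin n) ℂ))
    (hD : D ≤ restrictTotalDegree (Fin n) ℂ (μ - 1))
    (hdim : Module.finrank ℂ D = μ)
    (hstab : ∀ Λ' ∈ D, ∀ i : Fin n, pderiv i Λ' ∈ D)
    (hquot : ∀ Q : Ideal (MvPolynomial (Fin n) ℂ),
      (↑Q : Set (MvPolynomial (Fin n) ℂ)) =
          {p | ∀ Λ' ∈ D, dapply (0 : Fin n → ℂ) Λ' p = 0} →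
      ∀ t : ℕ, ∃ bt : Module.Basis {j : Fin μ // mdeg (β j) ≤ t} ℂ
          (MvPolynomial (Fin n) ℂ ⧸ (Q + mIdeal (0 : Fin n → ℂ) ^ (t + 1))),
        ∀ j, bt j = Ideal.Quotient.mk (Q + mIdeal (0 : Fin n → ℂ) ^ (t + 1))
          (monomial (β j.1) (1 : ℂ)))
    (Λ : Fin μ → MvPolynomial (Fin n) ℂ)
    (hmem : ∀ i, Λ i ∈ D)
    (hdual : ∀ i j, dapply (0 : Fin n → ℂ) (Λ i) (monomial (β j) (1 : ℂ)) =
      if i = j then 1 else 0) :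
    Λ ⟨0, hμ⟩ = 1 ∧
    (∀ i, i ≠ ⟨0, hμ⟩ →
      Λ i = ∑ j ∈ Finset.univ.filter (fun j => mdeg (β j) < mdeg (β i)), ∑ k,
        dapply (0 : Fin n → ℂ) (Λ i) (monomial (β j + Finsupp.single k 1) (1 : ℂ)) •
          integ k (Λ j)) ∧
    (∀ (i : Fin μ) (k : Fin n),
      pderiv k (Λ i) =
        ∑ j ∈ Finset.univ.filter (fun j => mdeg (β j) < mdeg (β i)),
          dapply (0 : Fin n → ℂ) (Λ i) (monomial (β j + Finsupp.single k 1) (1 : ℂ)) •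
            Λ j) ∧
    (∀ Λ' : Fin μ → MvPolynomial (Fin n) ℂ,
      Λ' ⟨0, hμ⟩ = 1 →
      (∀ i, i ≠ ⟨0, hμ⟩ →
        Λ' i = ∑ j ∈ Finset.univ.filter (fun j => mdeg (β j) < mdeg (β i)), ∑ k,
          dapply (0 : Fin n → ℂ) (Λ i) (monomial (β j + Finsupp.single k 1) (1 : ℂ)) •
            integ k (Λ' j)) →
      Λ' = Λ) :=
  statement14_general hμ β hβ0 D hD hdim hstab hquot Λ hmem hdual
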